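/- arXiv:2412.04589 — 2 statements merged into one kernel-verified Lean document; each statement's English description precedes it below -/
import Mathlib

section
/- Let (𝓕^i)_{i∈I} be filtrations (increasing families of sub-σ-algebras indexed by t ∈ [0,∞)) on a common measurable space, and let (I_j)_{j∈J} be a partition of the index set I. Then the right-continuous regularization of the filtration (⋁_{i∈I} 𝓕^i_t)_{t≥0} equals the right-continuous regularization of (⋁_{j∈J} 𝓖^j_t)_{t≥0}, where for each j ∈ J, 𝔾^j = (𝓖^j_t)_{t≥0} is the right-continuous regularization of (⋁_{i∈I_j} 𝓕^i_t)_{t≥0}. -/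
open MeasureTheory ProbabilityTheory Filter Set
open scoped ENNReal Topology

noncomputable section

namespace InvMarkovJump

variable {Ω : Type*}

/-- `F` is a filtration (for times `t ≥ 0`) of sub-σ-algebras of `m0`. -/
def IsFiltration (m0 : MeasurableSpace Ω) (F : ℝ → MeasurableSpace Ω) : Prop :=
  (∀ s t : ℝ, 0 ≤ s → s ≤ t → F s ≤ F t) ∧ ∀ t : ℝ, F t ≤ m0

/-- The right-continuous regularization `(⋂_{s > t} F s)_{t ≥ 0}` of a filtration. -/
def rcReg (F : ℝ → MeasurableSpace Ω) : ℝ → MeasurableSpace Ω :=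
  fun t => ⨅ s ∈ Set.Ioi t, F s

/-- All sample paths of `M` are right-continuous (at every time `t ≥ 0`). -/
def RCPaths (M : ℝ → Ω → ℝ) : Prop :=
  ∀ ω, ∀ t : ℝ, 0 ≤ t → ContinuousWithinAt (fun s => M s ω) (Set.Ici t) t

/-- `M` is a martingale (for times `t ≥ 0`) with respect to the filtration `F`
under the measure `μ`: it is adapted, integrable, and `E[M_t | F_s] = M_s` a.s.
for all `0 ≤ s ≤ t`. -/
def IsMartingale {m0 : MeasurableSpace Ω} (μ : Measure Ω)
    (F : ℝ → MeasurableSpace Ω) (M : ℝ → Ω → ℝ) : Prop :=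
  (∀ t : ℝ, 0 ≤ t → Integrable (M t) μ) ∧
  (∀ t : ℝ, 0 ≤ t → Measurable[F t] (M t)) ∧
  ∀ s t : ℝ, 0 ≤ s → s ≤ t → μ[M t|F s] =ᵐ[μ] M s

/-- `F` is immersed in `G`: `F ⊆ G` and every `F`-martingale (with right-continuous
sample paths) is a `G`-martingale. -/
def Immersed {m0 : MeasurableSpace Ω} (μ : Measure Ω)
    (F G : ℝ → MeasurableSpace Ω) : Prop :=
  (∀ t : ℝ, 0 ≤ t → F t ≤ G t) ∧
  ∀ M : ℝ → Ω → ℝ, RCPaths M → IsMartingale μ F M → IsMartingale μ G M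

/-- The usual conditions: the filtration is right-continuous and `F 0` contains
all `μ`-null sets. -/
def UsualConditions {m0 : MeasurableSpace Ω} (μ : Measure Ω)
    (F : ℝ → MeasurableSpace Ω) : Prop :=
  IsFiltration m0 F ∧ (∀ t : ℝ, 0 ≤ t → F t = rcReg F t) ∧
    ∀ s : Set Ω, μ s = 0 → MeasurableSet[F 0] s

/-- `E` is `Exp(1)`-distributed: `P(E > x) = e^{-x}` for all `x ≥ 0`. -/
def IsExpOne {m0 : MeasurableSpace Ω} (μ : Measure Ω) (E : Ω → ℝ) : Prop :=
  Measurable E ∧ ∀ x : ℝ, 0 ≤ x → μ {ω | x < E ω} = ENNReal.ofReal (Real.exp (-x))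

/-- `F_∞ = ⋁_{t ≥ 0} F t`. -/
def Finfty (F : ℝ → MeasurableSpace Ω) : MeasurableSpace Ω :=
  ⨆ t ∈ Set.Ici (0:ℝ), F t

/-- The natural filtration `(σ(Y_s : 0 ≤ s ≤ t))_{t ≥ 0}` of a process `Y`. -/
def natFilt {β : Type*} [MeasurableSpace β] (Y : ℝ → Ω → β) : ℝ → MeasurableSpace Ω :=
  fun t => ⨆ s ∈ Set.Icc (0:ℝ) t, MeasurableSpace.comap (Y s) inferInstance

/-- Progressive measurability of a process `u` with respect to the filtration `F`:
for every `t ≥ 0`, `(s, ω) ↦ u s ω` on `[0, t] × Ω` is `B([0,t]) ⊗ F t`-measurable. -/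
def ProgMeas (F : ℝ → MeasurableSpace Ω) (u : ℝ → Ω → ℝ) : Prop :=
  ∀ t : ℝ, 0 ≤ t →
    Measurable[MeasurableSpace.prod inferInstance (F t)]
      (fun p : Set.Icc (0:ℝ) t × Ω => u p.1 p.2)

/-- For filtrations `(F i)_{i ∈ I}` and a partition `(part j)_{j ∈ J}` of `I`,
the right-continuous regularization of `(⋁_{i ∈ I} F i t)_t` equals the right-continuous
regularization of `(⋁_{j ∈ J} G j t)_t`, where `G j` is the right-continuous regularization
of `(⋁_{i ∈ part j} F i t)_t`. -/
theorem rcReg_iSup_partition {I J : Type*} {m0 : MeasurableSpace Ω}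
    (F : I → ℝ → MeasurableSpace Ω)
    (hF : ∀ i, IsFiltration m0 (F i))
    (part : J → Set I)
    (hdisj : Pairwise (Function.onFun Disjoint part))
    (hcover : (⋃ j, part j) = Set.univ)
    (G : J → ℝ → MeasurableSpace Ω)
    (hG : ∀ j, G j = rcReg (fun t => ⨆ i ∈ part j, F i t)) :
    ∀ t : ℝ, 0 ≤ t →
      rcReg (fun t' => ⨆ i, F i t') t = rcReg (fun t' => ⨆ j, G j t') t := by
  intro t ht
  apply le_antisymm
  · refine le_iInf₂ fun s hs => ?_
    refine le_trans (iInf₂_le s hs) ?_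
    refine iSup_le fun i => ?_
    obtain ⟨j, hj⟩ : ∃ j, i ∈ part j := by
      have h := Set.mem_univ i
      rw [← hcover] at h
      simpa using h
    refine le_trans ?_ (le_iSup _ j)
    rw [hG]
    refine le_iInf₂ fun u hu => ?_
    have h1 : F i s ≤ F i u :=
      (hF i).1 s u (le_trans ht (le_of_lt hs)) (le_of_lt hu)
    exact h1.trans (le_iSup₂ (f := fun i _ => F i u) i hj)
  · refine le_iInf₂ fun u hu => ?_
    have hu' : t < u := hu
    set s := (t + u) / 2 with hsdef
    have hts : s ∈ Set.Ioi t := by simp only [Set.mem_Ioi, hsdef]; linarith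
    have hsu : u ∈ Set.Ioi s := by simp only [Set.mem_Ioi, hsdef]; linarith
    refine le_trans (iInf₂_le s hts) ?_
    refine iSup_le fun j => ?_
    rw [hG]
    refine le_trans (iInf₂_le u hsu) ?_
    exact iSup₂_le fun i _ => le_iSup (f := fun i => F i u) i

end InvMarkovJump
end
end

section
/- Let (Ω, 𝓕, P) be a probability space and (𝔽^i = (𝓕^i_t)_{t≥0})_{i∈ℕ} a sequence of filtrations such that 𝔽^{i-1} is immersed in 𝔽^i for every i ≥ 1. Let 𝔾 be the right-continuous regularization of the filtration (⋁_{i=0}^∞ 𝓕^i_t)_{t≥0}. Then for every k ∈ ℕ, 𝔽^k is immersed in 𝔾; that is, every 𝔽^k-martingale with right-continuous sample paths is a 𝔾-martingale. -/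
open MeasureTheory ProbabilityTheory Filter Set
open scoped ENNReal Topology

noncomputable section

namespace InvMarkovJump

variable {Ω : Type*}

/-!
For fixed `s ≤ t`, the σ-algebras `F i s` increase in `i` (immersion includes inclusion), and a
martingale `M` of `F k` is a martingale of every `F i` with `i ≥ k`. Lévy's upward theorem turns
`E[M t | F i s] = M s` for all large `i` into `E[M t | ⋁ᵢ F i s] = M s`. To pass to the
right-continuous regularization `G`, take `uₙ ↓ s` with `s < uₙ ≤ t`: since `G s ≤ ⋁ᵢ F i uₙ`,
`E[M t | G s] = E[M uₙ | G s]`, and `M uₙ → M s` in `L¹`, by right-continuity of the paths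
together with uniform integrability of the conditional expectations `M uₙ = E[M t | ⋁ᵢ F i uₙ]`.
-/

theorem condExp_ae_eq_of_tendsto_eLpNorm {m m0 : MeasurableSpace Ω} {μ : Measure Ω}
    [IsFiniteMeasure μ] (hm : m ≤ m0) {f g : Ω → ℝ} {X : ℕ → Ω → ℝ}
    (hg : StronglyMeasurable[m] g) (hgi : Integrable g μ) (hX : ∀ n, Integrable (X n) μ)
    (hfX : ∀ n, μ[f|m] =ᵐ[μ] μ[X n|m])
    (hXg : Tendsto (fun n => eLpNorm (X n - g) 1 μ) atTop (𝓝 0)) :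
    μ[f|m] =ᵐ[μ] g := by
  have hbound : ∀ n, eLpNorm (μ[f|m] - g) 1 μ ≤ eLpNorm (X n - g) 1 μ := fun n =>
    calc eLpNorm (μ[f|m] - g) 1 μ = eLpNorm (μ[X n - g|m]) 1 μ := by
          refine eLpNorm_congr_ae ((condExp_sub (hX n) hgi m).trans ?_).symm
          rw [condExp_of_stronglyMeasurable hm hg hgi]
          exact (hfX n).symm.sub EventuallyEq.rfl
      _ ≤ eLpNorm (X n - g) 1 μ := eLpNorm_condExp_le_eLpNorm _ le_rfl
  have hzero : eLpNorm (μ[f|m] - g) 1 μ = 0 :=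
    le_antisymm (ge_of_tendsto' hXg hbound) zero_le
  rw [← sub_ae_eq_zero]
  exact (eLpNorm_eq_zero_iff ((stronglyMeasurable_condExp.mono hm).aestronglyMeasurable.sub
    (hg.mono hm).aestronglyMeasurable) one_ne_zero).1 hzero

theorem IsFiltration.iSup {m0 : MeasurableSpace Ω} {ι : Type*} {F : ι → ℝ → MeasurableSpace Ω}
    (hF : ∀ i, IsFiltration m0 (F i)) : IsFiltration m0 fun t => ⨆ i, F i t :=
  ⟨fun s t hs hst => iSup_mono fun i => (hF i).1 s t hs hst, fun t => iSup_le fun i => (hF i).2 t⟩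

theorem le_rcReg {m0 : MeasurableSpace Ω} {H : ℝ → MeasurableSpace Ω} (hH : IsFiltration m0 H)
    {t : ℝ} (ht : 0 ≤ t) : H t ≤ rcReg H t :=
  le_iInf₂ fun _ hu => hH.1 _ _ ht (le_of_lt hu)

theorem rcReg_le {H : ℝ → MeasurableSpace Ω} {s u : ℝ} (hsu : s < u) : rcReg H s ≤ H u :=
  iInf₂_le u hsu

section Martingale

variable {m0 : MeasurableSpace Ω} {μ : Measure Ω} [IsFiniteMeasure μ] {M : ℝ → Ω → ℝ}

theorem IsMartingale.iSup {F : ℕ → ℝ → MeasurableSpace Ω} (hF : ∀ i, IsFiltration m0 (F i))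
    (hmono : ∀ t, 0 ≤ t → Monotone fun i => F i t) {k : ℕ}
    (hM : ∀ i, k ≤ i → IsMartingale μ (F i) M) : IsMartingale μ (fun t => ⨆ i, F i t) M := by
  refine ⟨(hM k le_rfl).1, fun t ht => ((hM k le_rfl).2.1 t ht).mono (le_iSup (F · t) k) le_rfl,
    fun s t hs hst => ?_⟩
  let ℱ : Filtration ℕ m0 := ⟨fun i => F i s, hmono s hs, fun i => (hF i).2 s⟩
  have hlim : ∀ᵐ x ∂μ, Tendsto (fun i => (μ[M t|F i s]) x) atTop (𝓝 ((μ[M t|⨆ i, F i s]) x)) :=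
    tendsto_ae_condExp (ℱ := ℱ) (M t)
  have hconst : ∀ᵐ x ∂μ, ∀ i, k ≤ i → (μ[M t|F i s]) x = M s x :=
    ae_all_iff.2 fun i => eventually_imp_distrib_left.2 fun hi => (hM i hi).2.2 s t hs hst
  filter_upwards [hlim, hconst] with x hx hxk
  exact tendsto_nhds_unique hx (tendsto_atTop_of_eventually_const hxk)

theorem IsMartingale.condExp_rcReg_ae_eq {H : ℝ → MeasurableSpace Ω} (hH : IsFiltration m0 H)
    (hM : IsMartingale μ H M) (hRC : RCPaths M) {s t : ℝ} (hs : 0 ≤ s) (hst : s < t) :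
    μ[M t|rcReg H s] =ᵐ[μ] M s := by
  obtain ⟨u, -, hu, hu_lim⟩ := exists_seq_strictAnti_tendsto' hst
  have hu0 : ∀ n, 0 ≤ u n := fun n => hs.trans (hu n).1.le
  have hMu : ∀ n, μ[M t|H (u n)] =ᵐ[μ] M (u n) := fun n => hM.2.2 _ _ (hu0 n) (hu n).2.le
  have hae : ∀ᵐ x ∂μ, Tendsto (fun n => (μ[M t|H (u n)]) x) atTop (𝓝 (M s x)) := by
    filter_upwards [ae_all_iff.2 hMu] with x hx
    refine ((hRC x s hs).tendsto.comp ?_).congr fun n => (hx n).symm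
    exact tendsto_nhdsWithin_iff.2 ⟨hu_lim, Eventually.of_forall fun n => (hu n).1.le⟩
  have hui : UniformIntegrable (fun n => μ[M t|H (u n)]) 1 μ :=
    (hM.1 t (hs.trans hst.le)).uniformIntegrable_condExp fun n => hH.2 (u n)
  exact condExp_ae_eq_of_tendsto_eLpNorm ((rcReg_le (hu 0).1).trans (hH.2 _))
    (((hM.2.1 s hs).mono (le_rcReg hH hs) le_rfl).stronglyMeasurable) (hM.1 s hs)
    (fun _ => integrable_condExp)
    (fun n => (condExp_condExp_of_le (rcReg_le (hu n).1) (hH.2 _)).symm)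
    (tendsto_Lp_finite_of_tendsto_ae le_rfl ENNReal.one_ne_top hui.1
      (memLp_one_iff_integrable.2 (hM.1 s hs)) hui.2.1 hae)

theorem IsMartingale.rcReg {H : ℝ → MeasurableSpace Ω} (hH : IsFiltration m0 H)
    (hM : IsMartingale μ H M) (hRC : RCPaths M) : IsMartingale μ (rcReg H) M := by
  have hadapted : ∀ t, 0 ≤ t → Measurable[InvMarkovJump.rcReg H t] (M t) := fun t ht =>
    (hM.2.1 t ht).mono (le_rcReg hH ht) le_rfl
  refine ⟨hM.1, hadapted, fun s t hs hst => ?_⟩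
  rcases hst.eq_or_lt with rfl | hlt
  · rw [condExp_of_stronglyMeasurable ((rcReg_le (lt_add_one s)).trans (hH.2 _))
      (hadapted s hs).stronglyMeasurable (hM.1 s hs)]
  · exact hM.condExp_rcReg_ae_eq hH hRC hs hlt

end Martingale

/-- If each `F i` is immersed in `F (i+1)`, then each `F k` is immersed in
the right-continuous regularization of `(⋁_{i ∈ ℕ} F i t)_t`. -/
theorem immersed_iSup {m0 : MeasurableSpace Ω} (μ : Measure Ω) [IsProbabilityMeasure μ]
    (F : ℕ → ℝ → MeasurableSpace Ω)
    (hF : ∀ i, IsFiltration m0 (F i))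
    (himm : ∀ i : ℕ, Immersed μ (F i) (F (i + 1))) :
    ∀ k : ℕ, Immersed μ (F k) (rcReg fun t => ⨆ i, F i t) := by
  intro k
  have hH : IsFiltration m0 fun t => ⨆ i, F i t := IsFiltration.iSup hF
  have hmono : ∀ t, 0 ≤ t → Monotone fun i => F i t := fun t ht =>
    monotone_nat_of_le_succ fun i => (himm i).1 t ht
  refine ⟨fun t ht => (le_iSup (F · t) k).trans (le_rcReg hH ht), fun M hRC hM => ?_⟩
  have hMi : ∀ i, k ≤ i → IsMartingale μ (F i) M := fun i hi => by
    induction i, hi using Nat.le_induction with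
    | base => exact hM
    | succ i _ ih => exact (himm i).2 M hRC ih
  exact (IsMartingale.iSup hF hmono hMi).rcReg hH hRC

end InvMarkovJump
end
end
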